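/- Poincaré-type inequality for measurable cells: Let (M, d, vol) be a metric measure space, 0 < ε < r, and V ⊂ M a measurable set with diameter ≤ ε and vol(V) = μ > 0. Suppose vol(B_{r−ε}(x)) ≥ c (r − ε)^n for all x ∈ V (for some constant c > 0). Let f ∈ L²(M) and a = μ^{-1} ∫_V f. Then ∫_V |f(x) − a|² dx ≤ (c (r−ε)^n)^{-1} ∫_V ∫_{B_r(x)} |f(y) − f(x)|² dy dx. -/

import Mathlib

/-!
Fix `x₀ ∈ V` and put `W = B_{r-ε}(x₀)`; since `diam V ≤ ε`, `W ⊆ B_r(x)` for every `x ∈ V`.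
Writing `g = f - a`, expanding `(g y - g x)²` and integrating over `V × W` gives
`∫_V ∫_W |f(y) - f(x)|² = vol V · ∫_W g² + vol W · ∫_V g²`, the cross term vanishing because
`g` has mean zero on `V`. Hence `vol W · ∫_V |f - a|² ≤ ∫_V ∫_{B_r(x)} |f(y) - f(x)|²`, and
`vol W ≥ c (r - ε)ⁿ`.
-/

open MeasureTheory Metric Set

section TwoMeasures

variable {α : Type*} [MeasurableSpace α] {ν ρ : Measure α} [IsFiniteMeasure ν]
  [IsFiniteMeasure ρ] {g : α → ℝ}

lemma integrable_sub_sq (hg : MemLp g 2 ρ) (t : ℝ) : Integrable (fun y => (g y - t) ^ 2) ρ :=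
  (hg.sub (memLp_const t)).integrable_sq

lemma integral_sub_sq (hg : MemLp g 2 ρ) (t : ℝ) :
    ∫ y, (g y - t) ^ 2 ∂ρ = ∫ y, g y ^ 2 ∂ρ - 2 * t * ∫ y, g y ∂ρ + ρ.real univ * t ^ 2 := by
  have hlin : Integrable (fun y => 2 * t * g y) ρ := (hg.integrable one_le_two).const_mul _
  have hexpand : (fun y => (g y - t) ^ 2) = fun y => g y ^ 2 - 2 * t * g y + t ^ 2 := by
    ext; ring
  have hquad : Integrable (fun y => g y ^ 2 - 2 * t * g y) ρ := hg.integrable_sq.sub hlin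
  rw [hexpand, integral_add hquad (integrable_const _),
    integral_sub hg.integrable_sq hlin, integral_const_mul, integral_const, smul_eq_mul]

lemma integrable_integral_sub_sq (hν : MemLp g 2 ν) (hρ : MemLp g 2 ρ) :
    Integrable (fun x => ∫ y, (g y - g x) ^ 2 ∂ρ) ν := by
  simp_rw [integral_sub_sq hρ]
  exact ((integrable_const _).sub (((hν.integrable one_le_two).const_mul _).mul_const _)).add
    (hν.integrable_sq.const_mul _)

lemma integral_integral_sub_sq (hν : MemLp g 2 ν) (hρ : MemLp g 2 ρ) :
    ∫ x, ∫ y, (g y - g x) ^ 2 ∂ρ ∂ν = ν.real univ * ∫ y, g y ^ 2 ∂ρ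
      - 2 * (∫ y, g y ∂ρ) * ∫ x, g x ∂ν + ρ.real univ * ∫ x, g x ^ 2 ∂ν := by
  have hlin : Integrable (fun x => 2 * g x * ∫ y, g y ∂ρ) ν :=
    ((hν.integrable one_le_two).const_mul _).mul_const _
  have hquad : Integrable (fun x => ∫ y, g y ^ 2 ∂ρ - 2 * g x * ∫ y, g y ∂ρ) ν :=
    (integrable_const _).sub hlin
  simp_rw [integral_sub_sq hρ]
  rw [integral_add hquad (hν.integrable_sq.const_mul _), integral_sub (integrable_const _) hlin,
    integral_const, integral_mul_const, integral_const_mul, integral_const_mul, smul_eq_mul]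
  ring

lemma measureReal_univ_mul_integral_sub_average_sq_le {f : α → ℝ} (hν : MemLp f 2 ν)
    (hρ : MemLp f 2 ρ) :
    ρ.real univ * ∫ x, (f x - ⨍ y, f y ∂ν) ^ 2 ∂ν ≤ ∫ x, ∫ y, (f y - f x) ^ 2 ∂ρ ∂ν := by
  set a := ⨍ y, f y ∂ν
  have hcross : ∫ x, (f x - a) ∂ν = 0 := integral_sub_average ν f
  have hshift : ∀ x y, f y - f x = (f y - a) - (f x - a) := fun _ _ => by ring
  simp_rw [hshift]
  rw [integral_integral_sub_sq (g := fun x => f x - a) (hν.sub (memLp_const a))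
    (hρ.sub (memLp_const a)), hcross]
  have : 0 ≤ ν.real univ * ∫ y, (f y - a) ^ 2 ∂ρ :=
    mul_nonneg measureReal_nonneg (integral_nonneg fun _ => sq_nonneg _)
  linarith

end TwoMeasures

lemma setIntegral_sub_sq_mono_set {α : Type*} [MeasurableSpace α] {μ : Measure α} {f : α → ℝ}
    {s t : Set α} (hf : MemLp f 2 μ) (ht : μ t < ⊤) (hst : s ⊆ t) (z : ℝ) :
    ∫ y in s, (f y - z) ^ 2 ∂μ ≤ ∫ y in t, (f y - z) ^ 2 ∂μ :=
  have : IsFiniteMeasure (μ.restrict t) := isFiniteMeasure_restrict.2 ht.ne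
  setIntegral_mono_set (integrable_sub_sq (hf.restrict t) z)
    (Filter.Eventually.of_forall fun _ => sq_nonneg _) hst.eventuallyLE

theorem poincare_type_inequality_general
    {M : Type*} [MetricSpace M] [MeasurableSpace M]
    (vol : Measure M) (n : ℕ) (c ε r : ℝ) (hc : 0 < c) (hεr : ε < r)
    (V : Set M) (hVmeas : MeasurableSet V)
    (hVdiam : ∀ x ∈ V, ∀ y ∈ V, dist x y ≤ ε)
    (hVfin : vol V < ⊤)
    (μ : ℝ) (hμ : μ = (vol V).toReal) (hμpos : 0 < μ)
    (hvol : ∀ x ∈ V, c * (r - ε) ^ n ≤ (vol (ball x (r - ε))).toReal)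
    (hvolfin : ∀ x ∈ V, vol (ball x r) < ⊤)
    (f : M → ℝ) (hf : MemLp f 2 vol)
    (hint : Integrable (fun x => ∫ y in ball x r, (f y - f x) ^ 2 ∂vol) (vol.restrict V))
    (a : ℝ) (ha : a = μ⁻¹ * ∫ x in V, f x ∂vol) :
    ∫ x in V, (f x - a) ^ 2 ∂vol
      ≤ (c * (r - ε) ^ n)⁻¹ * ∫ x in V, ∫ y in ball x r, (f y - f x) ^ 2 ∂vol ∂vol := by
  obtain ⟨x₀, hx₀⟩ : V.Nonempty :=
    nonempty_of_measure_ne_zero (ENNReal.toReal_pos_iff.1 (hμ ▸ hμpos)).1.ne'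
  set W := ball x₀ (r - ε)
  have hW : ∀ x ∈ V, W ⊆ ball x r := fun x hx =>
    ball_subset_ball' (by linarith [hVdiam x₀ hx₀ x hx])
  have : IsFiniteMeasure (vol.restrict V) := isFiniteMeasure_restrict.2 hVfin.ne
  have : IsFiniteMeasure (vol.restrict W) :=
    isFiniteMeasure_restrict.2 ((measure_mono (hW x₀ hx₀)).trans_lt (hvolfin x₀ hx₀)).ne
  have ha' : a = ⨍ x in V, f x ∂vol := by rw [ha, hμ, setAverage_eq, smul_eq_mul, measureReal_def]
  have hlower := measureReal_univ_mul_integral_sub_average_sq_le (hf.restrict V) (hf.restrict W)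
  rw [measureReal_restrict_apply_univ, ← ha'] at hlower
  have hmono : ∫ x in V, ∫ y in W, (f y - f x) ^ 2 ∂vol ∂vol
      ≤ ∫ x in V, ∫ y in ball x r, (f y - f x) ^ 2 ∂vol ∂vol :=
    setIntegral_mono_on (integrable_integral_sub_sq (hf.restrict V) (hf.restrict W)) hint hVmeas
      fun x hx => setIntegral_sub_sq_mono_set hf (hvolfin x hx) (hW x hx) (f x)
  have hpos : 0 < c * (r - ε) ^ n := by have := sub_pos.2 hεr; positivity
  rw [le_inv_mul_iff₀ hpos]
  calc c * (r - ε) ^ n * ∫ x in V, (f x - a) ^ 2 ∂vol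
      ≤ vol.real W * ∫ x in V, (f x - a) ^ 2 ∂vol :=
        mul_le_mul_of_nonneg_right (hvol x₀ hx₀) (integral_nonneg fun _ => sq_nonneg _)
    _ ≤ _ := hlower.trans hmono

/-- Poincaré-type inequality for measurable cells: let `(M, d, vol)` be a metric measure
space, `0 < ε < r`, and `V ⊆ M` a measurable set of diameter at most `ε` with
`vol V = μ > 0`.  Suppose `vol (B_{r−ε}(x)) ≥ c (r − ε)ⁿ` for all `x ∈ V`.  Then, with
`a = μ⁻¹ ∫_V f` the mean of `f` on `V`,
`∫_V |f − a|² ≤ (c (r−ε)ⁿ)⁻¹ ∫_V ∫_{B_r(x)} |f(y) − f(x)|² dy dx`. -/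
theorem poincare_type_inequality
    {M : Type*} [MetricSpace M] [MeasurableSpace M] [BorelSpace M]
    (vol : Measure M) (n : ℕ) (c ε r : ℝ) (hc : 0 < c) (hε : 0 < ε) (hεr : ε < r)
    (V : Set M) (hVmeas : MeasurableSet V)
    (hVdiam : ∀ x ∈ V, ∀ y ∈ V, dist x y ≤ ε)
    (hVfin : vol V < ⊤)
    (μ : ℝ) (hμ : μ = (vol V).toReal) (hμpos : 0 < μ)
    (hvol : ∀ x ∈ V, c * (r - ε) ^ n ≤ (vol (ball x (r - ε))).toReal)
    (hvolfin : ∀ x ∈ V, vol (ball x r) < ⊤)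
    (f : M → ℝ) (hf : MemLp f 2 vol)
    (hint : Integrable (fun x => ∫ y in ball x r, (f y - f x) ^ 2 ∂vol) (vol.restrict V))
    (a : ℝ) (ha : a = μ⁻¹ * ∫ x in V, f x ∂vol) :
    ∫ x in V, (f x - a) ^ 2 ∂vol
      ≤ (c * (r - ε) ^ n)⁻¹ * ∫ x in V, ∫ y in ball x r, (f y - f x) ^ 2 ∂vol ∂vol :=
  poincare_type_inequality_general vol n c ε r hc hεr V hVmeas hVdiam hVfin μ hμ hμpos hvol hvolfin
    f hf hint a ha
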